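/- For every $c \in (0,1)$, integer $N \geq 2$, and $\epsilon > 0$, there exists a sequence of sets $S_n \subseteq \{0,\dots,N-1\}^n$ such that $\liminf_{n\to\infty} |S_n|/N^n \geq c$ and for all sufficiently large $n$, $M(S_n) \leq (1+\epsilon)\log_2 n$. -/

import Mathlib

/-!
Alteration method. Keep each point of the box `{0, …, N-1}^n` independently with probability
`p ∈ (c, 1)` and put `m = ⌊(1 + ε) log₂ n⌋ + 1`. An affine `m`-cube in the box is `y ↦ A y + z`
with `z` in the box and the entries of `A` in `[1 - N, N - 1]`, so there are at most
`(2N - 1)^(nm) N^n` of them, each surviving with probability `p^(2^m)`. Deleting the base point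
`z` of every surviving cube leaves no `m`-cube and costs in expectation
`(2N - 1)^(nm) p^(2^m) N^n = o(N^n)`, since `2^m ≥ n^(1+ε)` beats `nm = O(n log n)`.
-/

open scoped BigOperators

/-- The 0/1 cube in `ℤ^m`. -/
def cube (m : ℕ) : Set (Fin m → ℤ) := {v | ∀ i, v i = 0 ∨ v i = 1}

/-- `S` contains an affine copy of the `m`-dimensional 0/1 cube: there is a map
`ι` which is affine (of the form `y ↦ A y + z` on the cube), injective on the
cube, and whose image of the cube is contained in `S`. -/
def HasCube {n : ℕ} (S : Set (Fin n → ℤ)) (m : ℕ) : Prop :=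
  ∃ ι : (Fin m → ℤ) → (Fin n → ℤ),
    (∃ A : Matrix (Fin n) (Fin m) ℤ, ∃ z : Fin n → ℤ, ∀ y ∈ cube m, ι y = A.mulVec y + z) ∧
    Set.InjOn ι (cube m) ∧ ι '' (cube m) ⊆ S

/-- `M(S)`: the largest `m` such that `S` contains an affine copy of the `m`-cube. -/
noncomputable def Mval {n : ℕ} (S : Set (Fin n → ℤ)) : ℕ := sSup {m | HasCube S m}

/-- The box `{0,1,…,N-1}^n` inside `ℤ^n`. -/
noncomputable def box (N n : ℕ) : Finset (Fin n → ℤ) := Fintype.piFinset fun _ => Finset.Icc 0 ((N : ℤ) - 1)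

/-- `f_N(n,c)`: the minimal value of `M(S)` over subsets `S` of the box of density at least `c`. -/
noncomputable def fN (N n : ℕ) (c : ℝ) : ℕ :=
  sInf {k | ∃ S : Finset (Fin n → ℤ), S ⊆ box N n ∧ c * (N : ℝ) ^ n ≤ S.card ∧
    Mval (S : Set (Fin n → ℤ)) = k}

open Filter Asymptotics Topology Matrix
open scoped Finset

section Deletion

open Finset

variable {α ι : Type*}

noncomputable def bernoulliWeight (p : ℝ) (B S : Finset α) : ℝ := p ^ #S * (1 - p) ^ (#B - #S)

lemma bernoulliWeight_pos {p : ℝ} (hp0 : 0 < p) (hp1 : p < 1) (B S : Finset α) :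
    0 < bernoulliWeight p B S :=
  mul_pos (pow_pos hp0 _) (pow_pos (sub_pos.2 hp1) _)

lemma sum_bernoulliWeight (p : ℝ) (B : Finset α) : ∑ S ∈ B.powerset, bernoulliWeight p B S = 1 := by
  simp only [bernoulliWeight, sum_pow_mul_eq_add_pow, add_sub_cancel, one_pow]

lemma sum_bernoulliWeight_superset [DecidableEq α] (p : ℝ) {B I : Finset α} (hI : I ⊆ B) :
    ∑ S ∈ B.powerset with I ⊆ S, bernoulliWeight p B S = p ^ #I := by
  have hshift : ∑ S ∈ B.powerset with I ⊆ S, bernoulliWeight p B S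
      = ∑ T ∈ (B \ I).powerset, p ^ #I * bernoulliWeight p (B \ I) T := by
    refine sum_nbij' (· \ I) (· ∪ I) ?_ ?_ ?_ ?_ ?_
    · intro S hS
      simp only [mem_filter, mem_powerset] at hS ⊢
      exact sdiff_subset_sdiff hS.1 le_rfl
    · intro T hT
      simp only [mem_filter, mem_powerset] at hT ⊢
      exact ⟨union_subset (hT.trans sdiff_subset) hI, subset_union_right⟩
    · intro S hS
      exact sdiff_union_of_subset (mem_filter.1 hS).2
    · intro T hT
      exact union_sdiff_cancel_right (disjoint_of_subset_left (mem_powerset.1 hT) sdiff_disjoint)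
    · intro S hS
      obtain ⟨hSB, hIS⟩ := mem_filter.1 hS
      have := card_le_card hIS
      have := card_le_card (mem_powerset.1 hSB)
      rw [bernoulliWeight, bernoulliWeight, card_sdiff_of_subset hIS, card_sdiff_of_subset hI,
        ← mul_assoc, ← pow_add]
      congr 2 <;> omega
  rw [hshift, ← mul_sum, sum_bernoulliWeight, mul_one]

lemma sum_bernoulliWeight_mul_card [DecidableEq α] (p : ℝ) (B : Finset α) :
    ∑ S ∈ B.powerset, bernoulliWeight p B S * #S = p * #B := by
  have hcard : ∀ S ∈ B.powerset, (#S : ℝ) = ∑ x ∈ B, if {x} ⊆ S then 1 else 0 := by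
    intro S hS
    simp only [singleton_subset_iff, sum_boole, filter_mem_eq_inter,
      inter_eq_right.2 (mem_powerset.1 hS)]
  simp_rw [sum_congr rfl fun S hS => congrArg _ (hcard S hS), mul_sum, mul_boole]
  rw [sum_comm, mul_comm, ← nsmul_eq_mul, ← sum_const]
  refine sum_congr rfl fun x hx => ?_
  rw [← sum_filter, sum_bernoulliWeight_superset p (singleton_subset_iff.2 hx), card_singleton,
    pow_one]


lemma exists_card_sub_card_survivors_ge [DecidableEq α]
    (B : Finset α) (F : Finset ι) (g : ι → Finset α) {k : ℕ} (hk : ∀ i ∈ F, k ≤ #(g i))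
    {p : ℝ} (hp0 : 0 < p) (hp1 : p < 1) :
    ∃ S ⊆ B, p * #B - #F * p ^ k ≤ (#S : ℝ) - #{i ∈ F | g i ⊆ S} := by
  set w := bernoulliWeight p B
  have hsurvivors : ∑ S ∈ B.powerset, w S * #{i ∈ F | g i ⊆ S} ≤ #F * p ^ k := by
    calc ∑ S ∈ B.powerset, w S * #{i ∈ F | g i ⊆ S}
        = ∑ i ∈ F, ∑ S ∈ B.powerset with g i ⊆ S, w S := by
          simp_rw [card_filter, Nat.cast_sum, mul_sum, Nat.cast_ite, Nat.cast_one, Nat.cast_zero,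
            mul_boole]
          rw [sum_comm]
          simp_rw [sum_filter]
      _ ≤ ∑ i ∈ F, p ^ k := by
          refine sum_le_sum fun i hi => ?_
          by_cases hgB : g i ⊆ B
          · rw [sum_bernoulliWeight_superset p hgB]
            exact pow_le_pow_of_le_one hp0.le hp1.le (hk i hi)
          · rw [sum_eq_zero fun S hS => absurd ((mem_filter.1 hS).2.trans
              (mem_powerset.1 (mem_filter.1 hS).1)) hgB]
            positivity
      _ = #F * p ^ k := by rw [sum_const, nsmul_eq_mul]
  obtain ⟨S, hSB, hS⟩ : ∃ S ∈ B.powerset,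
      w S * (p * #B - #F * p ^ k) ≤ w S * ((#S : ℝ) - #{i ∈ F | g i ⊆ S}) := by
    refine exists_le_of_sum_le ⟨∅, empty_mem_powerset B⟩ ?_
    rw [← sum_mul, sum_bernoulliWeight, one_mul, sum_congr rfl fun S _ => mul_sub (w S) _ _,
      sum_sub_distrib, sum_bernoulliWeight_mul_card]
    linarith
  exact ⟨S, mem_powerset.1 hSB, le_of_mul_le_mul_left hS (bernoulliWeight_pos hp0 hp1 B S)⟩

theorem exists_subset_card_ge_forall_not_subset [DecidableEq α]
    (B : Finset α) (F : Finset ι) (g : ι → Finset α) (pt : ι → α) (hpt : ∀ i ∈ F, pt i ∈ g i)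
    {k : ℕ} (hk : ∀ i ∈ F, k ≤ #(g i)) {p : ℝ} (hp0 : 0 < p) (hp1 : p < 1) :
    ∃ S ⊆ B, p * #B - #F * p ^ k ≤ #S ∧ ∀ i ∈ F, ¬ g i ⊆ S := by
  obtain ⟨S₀, hS₀B, hS₀⟩ := exists_card_sub_card_survivors_ge B F g hk hp0 hp1
  set survivors := {i ∈ F | g i ⊆ S₀}
  refine ⟨S₀ \ survivors.image pt, sdiff_subset.trans hS₀B, ?_, fun i hi hgi => ?_⟩
  · have hdel : (#S₀ : ℝ) ≤ #(S₀ \ survivors.image pt) + #survivors := by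
      exact_mod_cast card_le_card_sdiff_add_card.trans (add_le_add_right card_image_le _)
    linarith
  · have hsurv : i ∈ survivors := mem_filter.2 ⟨hi, hgi.trans sdiff_subset⟩
    exact (mem_sdiff.1 (hgi (hpt i hi))).2 (mem_image_of_mem pt hsurv)

end Deletion

def cubeFinset (m : ℕ) : Finset (Fin m → ℤ) := Fintype.piFinset fun _ => {0, 1}

lemma coe_cubeFinset (m : ℕ) : (cubeFinset m : Set (Fin m → ℤ)) = cube m := by
  ext v
  simp [cubeFinset, cube]

lemma card_cubeFinset (m : ℕ) : #(cubeFinset m) = 2 ^ m := by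
  simp [cubeFinset]

lemma zero_mem_cube (m : ℕ) : (0 : Fin m → ℤ) ∈ cube m := fun _ => Or.inl rfl

lemma single_mem_cube {m : ℕ} (j : Fin m) : (Pi.single j 1 : Fin m → ℤ) ∈ cube m := by
  intro i
  by_cases h : i = j <;> simp [h]

lemma hasCube_iff {n m : ℕ} {S : Set (Fin n → ℤ)} :
    HasCube S m ↔ ∃ (A : Matrix (Fin n) (Fin m) ℤ) (z : Fin n → ℤ),
      Set.InjOn (fun y => A *ᵥ y + z) (cube m) ∧ ∀ y ∈ cube m, A *ᵥ y + z ∈ S := by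
  constructor
  · rintro ⟨ι, ⟨A, z, hι⟩, hinj, himg⟩
    exact ⟨A, z, hinj.congr hι, fun y hy => hι y hy ▸ himg (Set.mem_image_of_mem ι hy)⟩
  · rintro ⟨A, z, hinj, hmem⟩
    exact ⟨_, ⟨A, z, fun _ _ => rfl⟩, hinj, Set.image_subset_iff.2 hmem⟩

lemma HasCube.of_add {n m r : ℕ} {S : Set (Fin n → ℤ)} (h : HasCube S (m + r)) :
    HasCube S m := by
  obtain ⟨A, z, hinj, hmem⟩ := hasCube_iff.1 h
  have hpad : ∀ y ∈ cube m, Fin.append y (0 : Fin r → ℤ) ∈ cube (m + r) := fun y hy =>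
    Fin.addCases (fun i => by simpa using hy i) (fun i => by simp)
  have hmul : ∀ y, A *ᵥ Fin.append y 0 = A.submatrix id (Fin.castAdd r) *ᵥ y := by
    intro y
    ext i
    simp [Matrix.mulVec, dotProduct, Fin.sum_univ_add]
  refine hasCube_iff.2 ⟨A.submatrix id (Fin.castAdd r), z, fun y hy y' hy' hyy' => ?_,
    fun y hy => hmul y ▸ hmem _ (hpad y hy)⟩
  have happend := hinj (hpad y hy) (hpad y' hy') (by simpa only [hmul] using hyy')
  funext i
  simpa using congrFun happend (Fin.castAdd r i)

lemma HasCube.mono {n m k : ℕ} {S : Set (Fin n → ℤ)} (h : HasCube S k) (hmk : m ≤ k) :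
    HasCube S m := by
  obtain ⟨r, rfl⟩ := Nat.exists_eq_add_of_le hmk
  exact h.of_add

lemma Mval_le_of_not_hasCube_succ {n m : ℕ} {S : Set (Fin n → ℤ)} (h : ¬ HasCube S (m + 1)) :
    Mval S ≤ m :=
  csSup_le' fun _ hk => not_lt.1 fun hlt => h (HasCube.mono hk hlt)

lemma mem_box {N n : ℕ} {x : Fin n → ℤ} : x ∈ box N n ↔ ∀ i, 0 ≤ x i ∧ x i < N := by
  simp [box]

lemma card_box (N n : ℕ) : #(box N n) = N ^ n := by
  simp only [box, Fintype.card_piFinset, Int.card_Icc, Finset.prod_const, Finset.card_univ,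
    Fintype.card_fin]
  congr 1
  omega

noncomputable def boundedMatrices (N n m : ℕ) : Finset (Matrix (Fin n) (Fin m) ℤ) :=
  Fintype.piFinset fun _ => Fintype.piFinset fun _ => Finset.Icc (1 - (N : ℤ)) (N - 1)

lemma card_boundedMatrices (N n m : ℕ) : #(boundedMatrices N n m) = (2 * N - 1) ^ (n * m) := by
  refine (Fintype.card_piFinset _).trans ?_
  simp only [Fintype.card_piFinset, Int.card_Icc, Finset.prod_const, Finset.card_univ,
    Fintype.card_fin, ← pow_mul, Nat.mul_comm m n]
  congr 1
  omega

lemma mem_boundedMatrices_of_forall_mem_box {N n m : ℕ} {A : Matrix (Fin n) (Fin m) ℤ}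
    {z : Fin n → ℤ} (h : ∀ y ∈ cube m, A *ᵥ y + z ∈ box N n) :
    A ∈ boundedMatrices N n m ∧ z ∈ box N n := by
  have hz : z ∈ box N n := by simpa using h 0 (zero_mem_cube m)
  refine ⟨Fintype.mem_piFinset.2 fun i => Fintype.mem_piFinset.2 fun j => ?_, hz⟩
  have hcol := mem_box.1 (h _ (single_mem_cube j)) i
  have hzi := mem_box.1 hz i
  simp only [Matrix.mulVec_single_one, Pi.add_apply, Matrix.col_apply] at hcol
  rw [Finset.mem_Icc]
  omega

def affineCube {n m : ℕ} (A : Matrix (Fin n) (Fin m) ℤ) (z : Fin n → ℤ) : Finset (Fin n → ℤ) :=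
  (cubeFinset m).image fun y => A *ᵥ y + z

lemma card_affineCube {n m : ℕ} {A : Matrix (Fin n) (Fin m) ℤ} {z : Fin n → ℤ}
    (h : Set.InjOn (fun y => A *ᵥ y + z) (cube m)) : #(affineCube A z) = 2 ^ m := by
  rw [affineCube, Finset.card_image_of_injOn (by rwa [coe_cubeFinset]), card_cubeFinset]

lemma exists_subset_box_not_hasCube (N n m : ℕ) {p : ℝ} (hp0 : 0 < p) (hp1 : p < 1) :
    ∃ S ⊆ box N n, (p - (2 * N - 1 : ℕ) ^ (n * m) * p ^ 2 ^ m) * N ^ n ≤ #S ∧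
      ¬ HasCube (S : Set (Fin n → ℤ)) m := by
  classical
  set F := (boundedMatrices N n m ×ˢ box N n).filter
    fun Az => Set.InjOn (fun y => Az.1 *ᵥ y + Az.2) (cube m)
  have hF : (#F : ℝ) ≤ (2 * N - 1 : ℕ) ^ (n * m) * N ^ n := by
    exact_mod_cast (Finset.card_filter_le _ _).trans_eq
      (by rw [Finset.card_product, card_boundedMatrices, card_box])
  obtain ⟨S, hSB, hcard, hS⟩ := exists_subset_card_ge_forall_not_subset (box N n) F
    (fun Az => affineCube Az.1 Az.2) Prod.snd
    (fun Az _ => Finset.mem_image.2 ⟨0, by simp [cubeFinset], by simp⟩)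
    (fun Az hAz => (card_affineCube (Finset.mem_filter.1 hAz).2).ge) hp0 hp1
  refine ⟨S, hSB, ?_, fun hcube => ?_⟩
  · rw [card_box, Nat.cast_pow] at hcard
    calc (p - (2 * N - 1 : ℕ) ^ (n * m) * p ^ 2 ^ m) * N ^ n
        = p * N ^ n - (2 * N - 1 : ℕ) ^ (n * m) * N ^ n * p ^ 2 ^ m := by ring
      _ ≤ p * N ^ n - #F * p ^ 2 ^ m := by gcongr
      _ ≤ #S := hcard
  · obtain ⟨A, z, hinj, hmem⟩ := hasCube_iff.1 hcube
    have hbox := mem_boundedMatrices_of_forall_mem_box fun y hy => hSB (hmem y hy)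
    refine hS (A, z) (Finset.mem_filter.2 ⟨Finset.mem_product.2 hbox, hinj⟩) fun x hx => ?_
    obtain ⟨y, hy, rfl⟩ := Finset.mem_image.1 hx
    exact hmem y (by rwa [← coe_cubeFinset])

lemma tendsto_pow_mul_pow_of_isLittleO {K q : ℝ} (hK : 1 ≤ K) (hq0 : 0 ≤ q) (hq1 : q < 1)
    {a b : ℕ → ℕ} (hab : (fun n => (a n : ℝ)) =o[atTop] fun n => (b n : ℝ))
    (hb : Tendsto b atTop atTop) :
    Tendsto (fun n => K ^ a n * q ^ b n) atTop (𝓝 0) := by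
  obtain ⟨ε, hεq, hε⟩ : ∃ ε : ℝ, K ^ ε * q < 1 ∧ 0 < ε := by
    have hcont : Tendsto (fun ε : ℝ => K ^ ε * q) (𝓝[>] 0) (𝓝 q) := by
      have := ((Real.continuousAt_const_rpow (b := 0) (by positivity)).tendsto.mul_const q)
      rw [Real.rpow_zero, one_mul] at this
      exact this.mono_left nhdsWithin_le_nhds
    exact ((hcont.eventually_lt_const hq1).and self_mem_nhdsWithin).exists
  have hgeom : Tendsto (fun n => (K ^ ε * q) ^ b n) atTop (𝓝 0) :=
    (tendsto_pow_atTop_nhds_zero_of_lt_one (by positivity) hεq).comp hb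
  refine squeeze_zero' (Eventually.of_forall fun n => by positivity) ?_ hgeom
  filter_upwards [hab.bound hε] with n hn
  rw [Real.norm_natCast, Real.norm_natCast] at hn
  calc K ^ a n * q ^ b n ≤ K ^ (ε * b n) * q ^ b n := by
        gcongr
        rw [← Real.rpow_natCast]
        exact Real.rpow_le_rpow_of_exponent_le hK hn
    _ = (K ^ ε * q) ^ b n := by rw [mul_pow, Real.rpow_mul (by positivity), Real.rpow_natCast]

lemma isLittleO_mul_logb_rpow {ε : ℝ} (hε : 0 < ε) :
    (fun n : ℕ => (n : ℝ) * Real.logb 2 n) =o[atTop] fun n : ℕ => (n : ℝ) ^ (1 + ε) := by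
  have hlog : (fun x : ℝ => x * Real.log x) =o[atTop] fun x => x * x ^ ε :=
    (isBigO_refl _ _).mul_isLittleO (isLittleO_log_rpow_atTop hε)
  refine ((hlog.const_mul_left (Real.log 2)⁻¹).congr' (g₂ := fun x => x ^ (1 + ε))
    (f₂ := fun x => x * Real.logb 2 x) ?_ ?_).comp_tendsto tendsto_natCast_atTop_atTop
  · filter_upwards with x
    rw [Real.logb]
    ring
  · filter_upwards [eventually_gt_atTop 0] with x hx
    rw [Real.rpow_add hx, Real.rpow_one]

lemma rpow_le_two_pow_floor_logb {x : ℝ} (hx : 0 < x) (t : ℝ) :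
    x ^ t ≤ 2 ^ (⌊t * Real.logb 2 x⌋₊ + 1) :=
  calc x ^ t = 2 ^ (t * Real.logb 2 x) := by
        rw [mul_comm, Real.rpow_mul zero_le_two, Real.rpow_logb two_pos one_lt_two.ne' hx]
    _ ≤ 2 ^ ((⌊t * Real.logb 2 x⌋₊ + 1 : ℕ) : ℝ) :=
        Real.rpow_le_rpow_of_exponent_le one_le_two
          (by push_cast; exact (Nat.lt_floor_add_one _).le)
    _ = 2 ^ (⌊t * Real.logb 2 x⌋₊ + 1) := Real.rpow_natCast _ _

lemma isLittleO_mul_floor_logb {ε : ℝ} (hε : 0 < ε) :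
    (fun n : ℕ => ((n * (⌊(1 + ε) * Real.logb 2 n⌋₊ + 1) : ℕ) : ℝ)) =o[atTop]
      fun n : ℕ => ((2 ^ (⌊(1 + ε) * Real.logb 2 n⌋₊ + 1) : ℕ) : ℝ) := by
  refine IsBigO.trans_isLittleO (IsBigO.of_bound (2 + ε) ?_)
    ((isLittleO_mul_logb_rpow hε).trans_isBigO (IsBigO.of_bound 1 ?_))
  · filter_upwards [eventually_ge_atTop 2] with n hn
    have hlog : 1 ≤ Real.logb 2 n := by
      rw [Real.le_logb_iff_rpow_le one_lt_two (by positivity), Real.rpow_one]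
      exact_mod_cast hn
    have hfloor := Nat.floor_le (a := (1 + ε) * Real.logb 2 n) (by positivity)
    rw [Real.norm_of_nonneg (by positivity), Real.norm_of_nonneg (by positivity)]
    push_cast
    nlinarith [n.cast_nonneg (α := ℝ)]
  · filter_upwards [eventually_gt_atTop 0] with n hn
    rw [Real.norm_of_nonneg (by positivity), Real.norm_of_nonneg (by positivity), one_mul]
    push_cast
    exact rpow_le_two_pow_floor_logb (by exact_mod_cast hn) _

lemma tendsto_pow_mul_pow_floor_logb {K q ε : ℝ} (hK : 1 ≤ K) (hq0 : 0 ≤ q) (hq1 : q < 1)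
    (hε : 0 < ε) :
    Tendsto (fun n : ℕ => K ^ (n * (⌊(1 + ε) * Real.logb 2 n⌋₊ + 1)) *
      q ^ 2 ^ (⌊(1 + ε) * Real.logb 2 n⌋₊ + 1)) atTop (𝓝 0) := by
  refine tendsto_pow_mul_pow_of_isLittleO hK hq0 hq1 (isLittleO_mul_floor_logb hε)
    (tendsto_atTop_mono' atTop ?_ tendsto_id)
  filter_upwards [eventually_ge_atTop 1] with n hn
  have : (n : ℝ) ≤ ((2 ^ (⌊(1 + ε) * Real.logb 2 n⌋₊ + 1) : ℕ) : ℝ) := by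
    push_cast
    exact (Real.self_le_rpow_of_one_le (by exact_mod_cast hn) (by linarith : 1 ≤ 1 + ε)).trans
      (rpow_le_two_pow_floor_logb (by positivity) (1 + ε))
  exact_mod_cast this

theorem stmt13 (N : ℕ) (hN : 2 ≤ N) (c : ℝ) (hc0 : 0 < c) (hc1 : c < 1) (ε : ℝ) (hε : 0 < ε) :
    ∃ S : (n : ℕ) → Finset (Fin n → ℤ),
      (∀ n, S n ⊆ box N n) ∧
      c ≤ Filter.liminf (fun n : ℕ => ((S n).card : ℝ) / (N : ℝ) ^ n) Filter.atTop ∧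
      ∀ᶠ n : ℕ in Filter.atTop,
        (Mval ((S n : Finset (Fin n → ℤ)) : Set (Fin n → ℤ)) : ℝ) ≤ (1 + ε) * Real.logb 2 n := by
  obtain ⟨p, hcp, hp1⟩ := exists_between hc1
  have hp0 : 0 < p := hc0.trans hcp
  set d : ℕ → ℕ := fun n => ⌊(1 + ε) * Real.logb 2 n⌋₊
  choose S hSbox hScard hScube using fun n => exists_subset_box_not_hasCube N n (d n + 1) hp0 hp1
  have hsmall :
      ∀ᶠ n in atTop, ((2 * N - 1 : ℕ) : ℝ) ^ (n * (d n + 1)) * p ^ 2 ^ (d n + 1) ≤ p - c :=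
    (tendsto_pow_mul_pow_floor_logb (by norm_cast; omega) hp0.le hp1 hε).eventually
      (ge_mem_nhds (by linarith))
  have hNpow : ∀ n, (0 : ℝ) < N ^ n := fun n => by positivity
  refine ⟨S, hSbox, le_liminf_of_le (isCoboundedUnder_ge_of_le atTop (x := 1) fun n => ?_) ?_, ?_⟩
  · rw [div_le_one (hNpow n)]
    exact_mod_cast (Finset.card_le_card (hSbox n)).trans (card_box N n).le
  · filter_upwards [hsmall] with n hn
    rw [le_div_iff₀ (hNpow n)]
    exact (mul_le_mul_of_nonneg_right (by linarith) (hNpow n).le).trans (hScard n)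
  · filter_upwards [eventually_ge_atTop 1] with n hn
    calc (Mval (S n : Set (Fin n → ℤ)) : ℝ) ≤ d n := by
          exact_mod_cast Mval_le_of_not_hasCube_succ (hScube n)
      _ ≤ (1 + ε) * Real.logb 2 n :=
          Nat.floor_le (mul_nonneg (by linarith)
            (Real.logb_nonneg one_lt_two (by exact_mod_cast hn)))
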